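/- Let 𝒱 be a v-transform with fulcrum δ ∈ (0,1), generator Ψ differentiable with strictly positive derivative, and conditional down probability Δ. Let d ≥ 1 and let V = (V₁,…,V_d) be a random vector in [0,1]^d with uniform one-dimensional margins whose law has density c_V with respect to Lebesgue measure on [0,1]^d. Let W₁,…,W_d be i.i.d. uniform random variables on [0,1], independent of V, and define U_i = 𝒱⁻¹_s(V_i, W_i) for i = 1,…,d. Then the law of U = (U₁,…,U_d) has density with respect to Lebesgue measure on [0,1]^d given, for a.e. (u₁,…,u_d), by c_U(u₁,…,u_d) = c_V(𝒱(u₁),…,𝒱(u_d)). -/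

import Mathlib

/-!
For `s ∈ (0,δ)` let `s* = 1 - (1-δ)Ψ(s/δ) ∈ (δ,1)` be the dual point, with `𝒱 s* = 𝒱 s`, and
`k(s) = -ds*/ds > 0`. At `v = 𝒱 s` the stochastic inversion returns `s` with probability
`Δ(v) = 1/(1 + k(s))` and `s*` otherwise. Substituting `v = 𝒱 s` (so `|dv/ds| = 1 + k(s)`), the
joint law of `(V, 𝒱⁻¹ₛ(V,W))` for independent uniform `V, W` integrates `g` to
`∫_{(0,δ)} g(𝒱 s, s) + k(s) g(𝒱 s, s*) ds`, and substituting `u = s*` in the second term gives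
`∫_{[0,1]} g(𝒱 u, u) du`: the pair has the law of `(𝒱 U, U)` with `U` uniform. This holds
coordinatewise on `[0,1]^d`, and tilting the law of `V` by the density `c_V` then tilts the law of
`U` by `c_V ∘ 𝒱`.
-/

open Set MeasureTheory

/-- The v-transform with fulcrum `δ` and generator `Ψ` (with inverse `Ψinv`):
`𝒱(u) = (1-u) - (1-δ)·Ψ(u/δ)` for `u ≤ δ` and `𝒱(u) = u - δ·Ψinv((1-u)/(1-δ))`
for `u > δ`. -/
noncomputable def vt (δ : ℝ) (Ψ Ψinv : ℝ → ℝ) (u : ℝ) : ℝ :=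
  if u ≤ δ then (1 - u) - (1 - δ) * Ψ (u / δ)
  else u - δ * Ψinv ((1 - u) / (1 - δ))

/-- Left-branch inverse `𝒱⁻¹(v) = inf {u ∈ [0,1] : 𝒱 u = v}`. -/
noncomputable def vtInv (V : ℝ → ℝ) (v : ℝ) : ℝ :=
  sInf {u | u ∈ Set.Icc (0:ℝ) 1 ∧ V u = v}

/-- Conditional down probability `Δ(v) = -1 / 𝒱′(𝒱⁻¹(v))`. -/
noncomputable def vtDelta (V : ℝ → ℝ) (v : ℝ) : ℝ :=
  -1 / deriv V (vtInv V v)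

/-- Stochastic inversion function of a v-transform:
`𝒱⁻¹ₛ(v,w) = 𝒱⁻¹(v)` if `w ≤ Δ(v)`, and `v + 𝒱⁻¹(v)` otherwise. -/
noncomputable def vtSInv (V : ℝ → ℝ) (v w : ℝ) : ℝ :=
  if w ≤ vtDelta V v then vtInv V v else v + vtInv V v

open scoped ENNReal

section Measure

variable {α β : Type*} [MeasurableSpace α] [MeasurableSpace β]

theorem map_withDensity_comp {μ : Measure α} {f : α → β} (hf : Measurable f) {c : β → ℝ≥0∞}
    (hc : Measurable c) : (μ.withDensity (c ∘ f)).map f = (μ.map f).withDensity c := by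
  ext s hs
  rw [Measure.map_apply hf hs, withDensity_apply _ (hf hs), withDensity_apply _ hs,
    setLIntegral_map hs hc hf, Function.comp_def]

/-- If `(X, T)` has the law of `(φ U, U)`, tilting the law of `X` by a density `c` gives `T` the
density `c ∘ φ` with respect to the law of `U`. -/
theorem map_prod_withDensity_eq {μ : Measure α} {ν ρ : Measure β} [SFinite ν]
    {T : α × β → β} {φ : β → α} (hT : Measurable T) (hφ : Measurable φ)
    (h : (μ.prod ν).map (fun p => (p.1, T p)) = ρ.map (fun u => (φ u, u)))
    {c : α → ℝ≥0∞} (hc : Measurable c) :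
    ((μ.withDensity c).prod ν).map T = ρ.withDensity (c ∘ φ) := by
  have hG : Measurable fun p : α × β => (p.1, T p) := measurable_fst.prodMk hT
  have hΦ : Measurable fun u : β => (φ u, u) := hφ.prodMk measurable_id
  calc ((μ.withDensity c).prod ν).map T
      = (((μ.prod ν).withDensity ((c ∘ Prod.fst) ∘ fun p => (p.1, T p))).map
          fun p => (p.1, T p)).map Prod.snd := by
        rw [Measure.map_map measurable_snd hG, prod_withDensity_left hc]; rfl
    _ = ((ρ.withDensity ((c ∘ Prod.fst) ∘ fun u => (φ u, u))).map fun u => (φ u, u)).map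
          Prod.snd := by
        rw [map_withDensity_comp hG (hc.comp measurable_fst), h,
          map_withDensity_comp hΦ (hc.comp measurable_fst)]
    _ = ρ.withDensity (c ∘ φ) := by
        rw [Measure.map_map measurable_snd hΦ]; exact Measure.map_id

theorem map_pi_prod_eq_of_map_prod_eq {ι : Type*} [Fintype ι] {μ : Measure α} {ν ρ : Measure β}
    [IsFiniteMeasure μ] [IsFiniteMeasure ν] [IsFiniteMeasure ρ]
    {T : α × β → β} {φ : β → α} (hT : Measurable T) (hφ : Measurable φ)
    (h : (μ.prod ν).map (fun p => (p.1, T p)) = ρ.map (fun u => (φ u, u))) :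
    ((Measure.pi fun _ : ι => μ).prod (Measure.pi fun _ : ι => ν)).map
        (fun p => (p.1, fun i => T (p.1 i, p.2 i)))
      = (Measure.pi fun _ : ι => ρ).map (fun u => (fun i => φ (u i), u)) := by
  set e := MeasurableEquiv.arrowProdEquivProdArrow α β ι
  have hG : MeasurePreserving (fun (x : ι → α × β) i => ((x i).1, T (x i)))
      (Measure.pi fun _ => μ.prod ν) (Measure.pi fun _ => ρ.map fun u => (φ u, u)) :=
    measurePreserving_pi _ _ fun _ => ⟨measurable_fst.prodMk hT, h⟩
  have hΦ : MeasurePreserving (fun (u : ι → β) i => (φ (u i), u i))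
      (Measure.pi fun _ => ρ) (Measure.pi fun _ => ρ.map fun u => (φ u, u)) :=
    measurePreserving_pi _ _ fun _ => ⟨hφ.prodMk measurable_id, rfl⟩
  have hGm : Measurable fun p : (ι → α) × (ι → β) => (p.1, fun i => T (p.1 i, p.2 i)) :=
    measurable_fst.prodMk <| measurable_pi_lambda _ fun i =>
      hT.comp (((measurable_pi_apply i).comp measurable_fst).prodMk
        ((measurable_pi_apply i).comp measurable_snd))
  rw [← (measurePreserving_arrowProdEquivProdArrow α β ι _ _).map_eq,
    Measure.map_map hGm e.measurable]
  change (Measure.pi _).map (e ∘ fun (x : ι → α × β) i => ((x i).1, T (x i))) = _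
  rw [← Measure.map_map e.measurable hG.measurable, hG.map_eq, ← hΦ.map_eq,
    Measure.map_map e.measurable hΦ.measurable]
  rfl

theorem ae_mem_of_map_eq_withDensity_restrict {Ω : Type*} [MeasurableSpace Ω] {P : Measure Ω}
    {X : Ω → α} (hX : Measurable X) {μ : Measure α} {s : Set α} (hs : MeasurableSet s)
    {c : α → ℝ≥0∞} (h : P.map X = (μ.restrict s).withDensity c) : ∀ᵐ ω ∂P, X ω ∈ s :=
  ae_of_ae_map hX.aemeasurable <|
    h ▸ (withDensity_absolutelyContinuous _ _).ae_le (ae_restrict_mem hs)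

end Measure

theorem lintegral_Icc_ite_le {c : ℝ} (hc : c ∈ Icc (0:ℝ) 1) (x y : ℝ≥0∞) :
    ∫⁻ w in Icc (0:ℝ) 1, (if w ≤ c then x else y)
      = x * ENNReal.ofReal c + y * ENNReal.ofReal (1 - c) := by
  rw [← Icc_union_Ioc_eq_Icc hc.1 hc.2,
    lintegral_union measurableSet_Ioc (disjoint_left.2 fun w hw hw' => hw'.1.not_ge hw.2),
    setLIntegral_congr_fun measurableSet_Icc fun w hw => if_pos hw.2,
    setLIntegral_congr_fun measurableSet_Ioc fun w hw => if_neg hw.1.not_ge,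
    setLIntegral_const, setLIntegral_const, Real.volume_Icc, Real.volume_Ioc, sub_zero]

noncomputable def unitClamp (x : ℝ) : ℝ := projIcc 0 1 zero_le_one x

theorem unitClamp_mem (x : ℝ) : unitClamp x ∈ Icc (0:ℝ) 1 := (projIcc 0 1 zero_le_one x).2

theorem unitClamp_of_mem {x : ℝ} (hx : x ∈ Icc (0:ℝ) 1) : unitClamp x = x := by
  rw [unitClamp, projIcc_of_mem _ hx]

theorem monotone_unitClamp : Monotone unitClamp :=
  Subtype.mono_coe _ |>.comp (monotone_projIcc zero_le_one)

-- Off `[0,1]` the left-branch inverse is a junk `sInf`; clamping makes `𝒱⁻¹ₛ` measurable on `ℝ²`.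
theorem measurable_vtSInv_unitClamp {V : ℝ → ℝ} (hV : AntitoneOn (vtInv V) (Icc 0 1)) :
    Measurable fun p : ℝ × ℝ => vtSInv V (unitClamp p.1) p.2 := by
  have hL : Measurable fun v => vtInv V (unitClamp v) :=
    Antitone.measurable fun a b hab =>
      hV (unitClamp_mem a) (unitClamp_mem b) (monotone_unitClamp hab)
  have hΔ : Measurable fun v => vtDelta V (unitClamp v) :=
    measurable_const.div ((measurable_deriv V).comp hL)
  refine Measurable.ite (measurableSet_le measurable_snd (hΔ.comp measurable_fst))
    (hL.comp measurable_fst)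
    ((monotone_unitClamp.measurable.comp measurable_fst).add (hL.comp measurable_fst))

theorem measurable_vt {δ : ℝ} {Ψ Ψinv : ℝ → ℝ} (hΨ : Measurable Ψ) (hΨinv : Measurable Ψinv) :
    Measurable (vt δ Ψ Ψinv) :=
  Measurable.ite measurableSet_Iic
    ((measurable_const.sub measurable_id).sub (measurable_const.mul (hΨ.comp
      (measurable_id.div_const δ))))
    (measurable_id.sub (measurable_const.mul (hΨinv.comp
      ((measurable_const.sub measurable_id).div_const (1 - δ)))))

structure IsVTransform (δ : ℝ) (Ψ Ψinv : ℝ → ℝ) : Prop where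
  fulcrum_mem : δ ∈ Ioo (0:ℝ) 1
  continuousOn : ContinuousOn Ψ (Icc 0 1)
  strictMonoOn : StrictMonoOn Ψ (Icc 0 1)
  map_zero : Ψ 0 = 0
  map_one : Ψ 1 = 1
  inv : ∀ x ∈ Icc (0:ℝ) 1, Ψinv (Ψ x) = x ∧ Ψ (Ψinv x) = x
  deriv_pos : ∀ x ∈ Ioo (0:ℝ) 1, DifferentiableAt ℝ Ψ x ∧ 0 < deriv Ψ x

/-- For `s ≤ δ`, the point of the right branch with the same `𝒱`-value as `s`. -/
noncomputable def vtDual (δ : ℝ) (Ψ : ℝ → ℝ) (s : ℝ) : ℝ := 1 - (1 - δ) * Ψ (s / δ)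

theorem vt_of_le {δ : ℝ} {Ψ Ψinv : ℝ → ℝ} {u : ℝ} (hu : u ≤ δ) :
    vt δ Ψ Ψinv u = vtDual δ Ψ u - u := by
  rw [vt, if_pos hu, vtDual]; ring

namespace IsVTransform

variable {δ : ℝ} {Ψ Ψinv : ℝ → ℝ}

theorem div_fulcrum_mem (h : IsVTransform δ Ψ Ψinv) {s : ℝ} (hs : s ∈ Icc 0 δ) :
    s / δ ∈ Icc (0:ℝ) 1 :=
  ⟨div_nonneg hs.1 h.fulcrum_mem.1.le, div_le_one_of_le₀ hs.2 h.fulcrum_mem.1.le⟩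

theorem vtDual_zero (h : IsVTransform δ Ψ Ψinv) : vtDual δ Ψ 0 = 1 := by simp [vtDual, h.map_zero]

theorem vtDual_fulcrum (h : IsVTransform δ Ψ Ψinv) : vtDual δ Ψ δ = δ := by
  simp [vtDual, div_self h.fulcrum_mem.1.ne', h.map_one]

theorem continuousOn_vtDual (h : IsVTransform δ Ψ Ψinv) : ContinuousOn (vtDual δ Ψ) (Icc 0 δ) :=
  continuousOn_const.sub <| continuousOn_const.mul <|
    h.continuousOn.comp (continuousOn_id.div_const δ) fun _ hs => h.div_fulcrum_mem hs

theorem strictAntiOn_vtDual (h : IsVTransform δ Ψ Ψinv) : StrictAntiOn (vtDual δ Ψ) (Icc 0 δ) := by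
  intro a ha b hb hab
  have := h.strictMonoOn (h.div_fulcrum_mem ha) (h.div_fulcrum_mem hb)
    (div_lt_div_of_pos_right hab h.fulcrum_mem.1)
  have := h.fulcrum_mem.2
  simp only [vtDual]; nlinarith

theorem image_vtDual (h : IsVTransform δ Ψ Ψinv) : vtDual δ Ψ '' Ioo 0 δ = Ioo δ 1 := by
  rw [h.continuousOn_vtDual.image_Ioo_of_strictAntiOn h.fulcrum_mem.1.le h.strictAntiOn_vtDual,
    h.vtDual_zero, h.vtDual_fulcrum]

theorem vt_zero (h : IsVTransform δ Ψ Ψinv) : vt δ Ψ Ψinv 0 = 1 := by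
  rw [vt_of_le h.fulcrum_mem.1.le, h.vtDual_zero, sub_zero]

theorem vt_fulcrum (h : IsVTransform δ Ψ Ψinv) : vt δ Ψ Ψinv δ = 0 := by
  rw [vt_of_le le_rfl, h.vtDual_fulcrum, sub_self]

theorem continuousOn_vt (h : IsVTransform δ Ψ Ψinv) : ContinuousOn (vt δ Ψ Ψinv) (Icc 0 δ) :=
  (h.continuousOn_vtDual.sub continuousOn_id).congr fun _ hs => vt_of_le hs.2

theorem strictAntiOn_vt (h : IsVTransform δ Ψ Ψinv) : StrictAntiOn (vt δ Ψ Ψinv) (Icc 0 δ) := by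
  intro a ha b hb hab
  rw [vt_of_le ha.2, vt_of_le hb.2]
  linarith [h.strictAntiOn_vtDual ha hb hab]

theorem image_vt (h : IsVTransform δ Ψ Ψinv) : vt δ Ψ Ψinv '' Ioo 0 δ = Ioo 0 1 := by
  rw [h.continuousOn_vt.image_Ioo_of_strictAntiOn h.fulcrum_mem.1.le h.strictAntiOn_vt,
    h.vt_zero, h.vt_fulcrum]

theorem vt_vtDual (h : IsVTransform δ Ψ Ψinv) {s : ℝ} (hs : s ∈ Ioo 0 δ) :
    vt δ Ψ Ψinv (vtDual δ Ψ s) = vt δ Ψ Ψinv s := by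
  have hδ := h.fulcrum_mem
  have hdual : vtDual δ Ψ s ∈ Ioo δ 1 := h.image_vtDual ▸ mem_image_of_mem _ hs
  have harg : (1 - vtDual δ Ψ s) / (1 - δ) = Ψ (s / δ) := by
    rw [vtDual]; field_simp [(sub_pos.2 hδ.2).ne']; ring
  rw [vt, if_neg hdual.1.not_ge, harg, (h.inv _ (h.div_fulcrum_mem (Ioo_subset_Icc_self hs))).1,
    mul_div_cancel₀ _ hδ.1.ne', vt_of_le hs.2.le]

theorem vtInv_vt (h : IsVTransform δ Ψ Ψinv) {s : ℝ} (hs : s ∈ Icc 0 δ) :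
    vtInv (vt δ Ψ Ψinv) (vt δ Ψ Ψinv s) = s := by
  refine IsLeast.csInf_eq ⟨⟨⟨hs.1, hs.2.trans h.fulcrum_mem.2.le⟩, rfl⟩, ?_⟩
  rintro u ⟨hu, hus⟩
  by_cases huδ : u ≤ δ
  · exact (h.strictAntiOn_vt.injOn ⟨hu.1, huδ⟩ hs hus).ge
  · exact hs.2.trans (le_of_not_ge huδ)

theorem antitoneOn_vtInv (h : IsVTransform δ Ψ Ψinv) :
    AntitoneOn (vtInv (vt δ Ψ Ψinv)) (Icc 0 1) := by
  have hsurj : Icc 0 1 ⊆ vt δ Ψ Ψinv '' Icc 0 δ := by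
    rw [h.continuousOn_vt.image_Icc_of_antitoneOn h.fulcrum_mem.1.le
      h.strictAntiOn_vt.antitoneOn, h.vt_zero, h.vt_fulcrum]
  intro a ha b hb hab
  obtain ⟨s, hs, rfl⟩ := hsurj ha
  obtain ⟨t, ht, rfl⟩ := hsurj hb
  rw [h.vtInv_vt hs, h.vtInv_vt ht]
  exact (h.strictAntiOn_vt.le_iff_ge hs ht).1 hab

theorem hasDerivAt_vtDual (h : IsVTransform δ Ψ Ψinv) {s : ℝ} (hs : s ∈ Ioo 0 δ) :
    HasDerivAt (vtDual δ Ψ) (-((1 - δ) * (deriv Ψ (s / δ) * (1 / δ)))) s := by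
  have hΨ := (h.deriv_pos _ ⟨div_pos hs.1 h.fulcrum_mem.1, (div_lt_one h.fulcrum_mem.1).2 hs.2⟩).1
  exact ((hΨ.hasDerivAt.comp s ((hasDerivAt_id s).div_const δ)).const_mul (1 - δ)).const_sub 1

theorem differentiableAt_vtDual (h : IsVTransform δ Ψ Ψinv) {s : ℝ} (hs : s ∈ Ioo 0 δ) :
    DifferentiableAt ℝ (vtDual δ Ψ) s :=
  (h.hasDerivAt_vtDual hs).differentiableAt

theorem deriv_vtDual_neg (h : IsVTransform δ Ψ Ψinv) {s : ℝ} (hs : s ∈ Ioo 0 δ) :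
    deriv (vtDual δ Ψ) s < 0 := by
  have hδ := h.fulcrum_mem
  have := (h.deriv_pos _ ⟨div_pos hs.1 hδ.1, (div_lt_one hδ.1).2 hs.2⟩).2
  rw [(h.hasDerivAt_vtDual hs).deriv, neg_lt_zero]
  exact mul_pos (sub_pos.2 hδ.2) (mul_pos this (one_div_pos.2 hδ.1))

theorem hasDerivAt_vt (h : IsVTransform δ Ψ Ψinv) {s : ℝ} (hs : s ∈ Ioo 0 δ) :
    HasDerivAt (vt δ Ψ Ψinv) (deriv (vtDual δ Ψ) s - 1) s := by
  have hEq : vt δ Ψ Ψinv =ᶠ[nhds s] fun u => vtDual δ Ψ u - u :=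
    Filter.eventually_of_mem (Iio_mem_nhds hs.2) fun _ hu => vt_of_le (le_of_lt hu)
  exact hEq.hasDerivAt_iff.2 ((h.differentiableAt_vtDual hs).hasDerivAt.sub (hasDerivAt_id s))

theorem vtSInv_vt (h : IsVTransform δ Ψ Ψinv) {s : ℝ} (hs : s ∈ Ioo 0 δ) (w : ℝ) :
    vtSInv (vt δ Ψ Ψinv) (vt δ Ψ Ψinv s) w
      = if w ≤ (1 - deriv (vtDual δ Ψ) s)⁻¹ then s else vtDual δ Ψ s := by
  have hs' : s ∈ Icc 0 δ := Ioo_subset_Icc_self hs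
  rw [vtSInv, vtDelta, h.vtInv_vt hs', (h.hasDerivAt_vt hs).deriv, vt_of_le hs'.2,
    sub_add_cancel, neg_div, ← div_neg, neg_sub, one_div]

theorem monotoneOn_psiInv (h : IsVTransform δ Ψ Ψinv) : MonotoneOn Ψinv (Icc 0 1) := by
  have himg : Ψ '' Icc 0 1 = Icc 0 1 := by
    rw [h.continuousOn.image_Icc_of_monotoneOn zero_le_one h.strictMonoOn.monotoneOn,
      h.map_zero, h.map_one]
  rw [← himg]
  rintro _ ⟨s, hs, rfl⟩ _ ⟨t, ht, rfl⟩ hst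
  rw [(h.inv s hs).1, (h.inv t ht).1]
  exact (h.strictMonoOn.le_iff_le hs ht).1 hst

theorem exists_measurable_eqOn_vt (h : IsVTransform δ Ψ Ψinv) :
    ∃ f : ℝ → ℝ, Measurable f ∧ EqOn f (vt δ Ψ Ψinv) (Icc 0 1) := by
  have hδ := h.fulcrum_mem
  refine ⟨vt δ (Ψ ∘ unitClamp) (Ψinv ∘ unitClamp), measurable_vt ?_ ?_, fun u hu => ?_⟩
  · exact Monotone.measurable fun a b hab => h.strictMonoOn.monotoneOn (unitClamp_mem a)
      (unitClamp_mem b) (monotone_unitClamp hab)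
  · exact Monotone.measurable fun a b hab => h.monotoneOn_psiInv (unitClamp_mem a)
      (unitClamp_mem b) (monotone_unitClamp hab)
  · by_cases huδ : u ≤ δ
    · simp only [vt, if_pos huδ, Function.comp_apply,
        unitClamp_of_mem (h.div_fulcrum_mem ⟨hu.1, huδ⟩)]
    · have : (1 - u) / (1 - δ) ∈ Icc (0:ℝ) 1 :=
        ⟨div_nonneg (sub_nonneg.2 hu.2) (sub_pos.2 hδ.2).le,
          div_le_one_of_le₀ (by linarith [le_of_not_ge huδ]) (sub_pos.2 hδ.2).le⟩
      simp only [vt, if_neg huδ, Function.comp_apply, unitClamp_of_mem this]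

theorem lintegral_Icc_eq_add_lintegral_vtDual (h : IsVTransform δ Ψ Ψinv) (φ : ℝ → ℝ≥0∞) :
    ∫⁻ u in Icc 0 1, φ u = (∫⁻ s in Ioo 0 δ, φ s)
      + ∫⁻ s in Ioo 0 δ, ENNReal.ofReal (-deriv (vtDual δ Ψ) s) * φ (vtDual δ Ψ s) := by
  have hδ := h.fulcrum_mem
  rw [setLIntegral_congr Ioc_ae_eq_Icc.symm, ← Ioc_union_Ioc_eq_Ioc hδ.1.le hδ.2.le,
    lintegral_union measurableSet_Ioc (Ioc_disjoint_Ioc_of_le le_rfl),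
    setLIntegral_congr Ioo_ae_eq_Ioc.symm, setLIntegral_congr (Ioo_ae_eq_Ioc (a := δ)).symm,
    ← h.image_vtDual, lintegral_image_eq_lintegral_abs_deriv_mul measurableSet_Ioo
      (fun s hs => (h.differentiableAt_vtDual hs).hasDerivAt.hasDerivWithinAt)
      (h.strictAntiOn_vtDual.injOn.mono Ioo_subset_Icc_self)]
  congr 1
  exact setLIntegral_congr_fun measurableSet_Ioo fun s hs => by
    rw [abs_of_neg (h.deriv_vtDual_neg hs)]

theorem lintegral_vtSInv (h : IsVTransform δ Ψ Ψinv) {g : ℝ × ℝ → ℝ≥0∞} (hg : Measurable g) :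
    ∫⁻ p, g (p.1, vtSInv (vt δ Ψ Ψinv) (unitClamp p.1) p.2)
        ∂((volume.restrict (Icc (0:ℝ) 1)).prod (volume.restrict (Icc (0:ℝ) 1)))
      = ∫⁻ s in Ioo 0 δ, (g (vt δ Ψ Ψinv s, s)
          + ENNReal.ofReal (-deriv (vtDual δ Ψ) s) * g (vt δ Ψ Ψinv s, vtDual δ Ψ s)) := by
  have hT := measurable_vtSInv_unitClamp h.antitoneOn_vtInv
  rw [lintegral_prod (fun p => g (p.1, vtSInv (vt δ Ψ Ψinv) (unitClamp p.1) p.2))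
      (hg.comp (measurable_fst.prodMk hT)).aemeasurable,
    setLIntegral_congr Ioo_ae_eq_Icc.symm, ← h.image_vt,
    lintegral_image_eq_lintegral_abs_deriv_mul measurableSet_Ioo
      (fun s hs => (h.hasDerivAt_vt hs).hasDerivWithinAt)
      (h.strictAntiOn_vt.injOn.mono Ioo_subset_Icc_self)]
  refine setLIntegral_congr_fun measurableSet_Ioo fun s hs => ?_
  have hvt : vt δ Ψ Ψinv s ∈ Icc (0:ℝ) 1 :=
    Ioo_subset_Icc_self (h.image_vt ▸ mem_image_of_mem _ hs)
  simp only [unitClamp_of_mem hvt, h.vtSInv_vt hs, apply_ite (fun u => g (vt δ Ψ Ψinv s, u))]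
  set D := deriv (vtDual δ Ψ) s
  have hD : D < 0 := h.deriv_vtDual_neg hs
  have hc : (1 - D) * (1 - D)⁻¹ = 1 := mul_inv_cancel₀ (by linarith)
  have hdown : ENNReal.ofReal (1 - D) * ENNReal.ofReal (1 - D)⁻¹ = 1 := by
    rw [← ENNReal.ofReal_mul (by linarith), hc, ENNReal.ofReal_one]
  have hup : ENNReal.ofReal (1 - D) * ENNReal.ofReal (1 - (1 - D)⁻¹) = ENNReal.ofReal (-D) := by
    rw [← ENNReal.ofReal_mul (by linarith), mul_one_sub, hc]; ring_nf
  rw [lintegral_Icc_ite_le ⟨inv_nonneg.2 (by linarith), inv_le_one_of_one_le₀ (by linarith)⟩,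
    abs_of_neg (by linarith : D - 1 < 0), neg_sub, mul_add, mul_left_comm, hdown,
    mul_left_comm, hup, mul_one, mul_comm (g _)]

theorem map_vtSInv_eq (h : IsVTransform δ Ψ Ψinv) {f : ℝ → ℝ} (hf : Measurable f)
    (hfv : EqOn f (vt δ Ψ Ψinv) (Icc 0 1)) :
    ((volume.restrict (Icc (0:ℝ) 1)).prod (volume.restrict (Icc (0:ℝ) 1))).map
        (fun p => (p.1, vtSInv (vt δ Ψ Ψinv) (unitClamp p.1) p.2))
      = (volume.restrict (Icc (0:ℝ) 1)).map (fun u => (f u, u)) := by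
  have hT := measurable_vtSInv_unitClamp h.antitoneOn_vtInv
  have hδ := h.fulcrum_mem
  have hΦ : Measurable fun u => (f u, u) := hf.prodMk measurable_id
  refine Measure.ext_of_lintegral _ fun g hg => ?_
  rw [lintegral_map hg (measurable_fst.prodMk hT), lintegral_map hg hΦ,
    h.lintegral_Icc_eq_add_lintegral_vtDual, h.lintegral_vtSInv hg,
    ← lintegral_add_left (f := fun s => g (f s, s)) (hg.comp hΦ)]
  refine setLIntegral_congr_fun measurableSet_Ioo fun s hs => ?_
  have hdual : vtDual δ Ψ s ∈ Icc (0:ℝ) 1 :=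
    Ioo_subset_Icc_self (Ioo_subset_Ioo_left hδ.1.le (h.image_vtDual ▸ mem_image_of_mem _ hs))
  rw [hfv ⟨hs.1.le, hs.2.le.trans hδ.2.le⟩, hfv hdual, h.vt_vtDual hs]

end IsVTransform

theorem stmt_5_general {Ω : Type*} [MeasurableSpace Ω] (P : Measure Ω)
    (δ : ℝ) (hδ : δ ∈ Set.Ioo (0:ℝ) 1) (Ψ Ψinv : ℝ → ℝ)
    (hΨc : ContinuousOn Ψ (Set.Icc 0 1)) (hΨm : StrictMonoOn Ψ (Set.Icc 0 1))
    (hΨ0 : Ψ 0 = 0) (hΨ1 : Ψ 1 = 1)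
    (hΨinv : ∀ x ∈ Set.Icc (0:ℝ) 1, Ψinv (Ψ x) = x ∧ Ψ (Ψinv x) = x)
    (hΨd : ∀ x ∈ Set.Ioo (0:ℝ) 1, DifferentiableAt ℝ Ψ x ∧ 0 < deriv Ψ x)
    (d : ℕ)
    (V : Ω → Fin d → ℝ) (hVm : Measurable V)
    (W : Ω → Fin d → ℝ) (hWm : Measurable W)
    (cV : (Fin d → ℝ) → ℝ) (hcVm : Measurable cV)
    -- the law of `V` has density `cV` w.r.t. Lebesgue measure on `[0,1]^d`
    (hVlaw : Measure.map V P
      = (volume.restrict (Set.univ.pi fun _ : Fin d => Set.Icc (0:ℝ) 1)).withDensity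
          fun x => ENNReal.ofReal (cV x))
    -- `W₁,…,W_d` are i.i.d. uniform on `[0,1]` and independent of `V`
    (hW : Measure.map (fun ω => (V ω, W ω)) P
      = (Measure.map V P).prod
          (volume.restrict (Set.univ.pi fun _ : Fin d => Set.Icc (0:ℝ) 1))) :
    -- the law of `U` with `Uᵢ = 𝒱⁻¹ₛ(Vᵢ, Wᵢ)` has density `u ↦ c_V(𝒱(u₁),…,𝒱(u_d))`
    Measure.map (fun ω i => vtSInv (vt δ Ψ Ψinv) (V ω i) (W ω i)) P
      = (volume.restrict (Set.univ.pi fun _ : Fin d => Set.Icc (0:ℝ) 1)).withDensity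
          fun u => ENNReal.ofReal (cV fun i => vt δ Ψ Ψinv (u i)) := by
  have h : IsVTransform δ Ψ Ψinv := ⟨hδ, hΨc, hΨm, hΨ0, hΨ1, hΨinv, hΨd⟩
  obtain ⟨f, hf, hfv⟩ := h.exists_measurable_eqOn_vt
  set T : ℝ × ℝ → ℝ := fun p => vtSInv (vt δ Ψ Ψinv) (unitClamp p.1) p.2
  have hT : Measurable T := measurable_vtSInv_unitClamp h.antitoneOn_vtInv
  have hTd : Measurable fun p : (Fin d → ℝ) × (Fin d → ℝ) => fun i => T (p.1 i, p.2 i) :=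
    measurable_pi_lambda _ fun i => hT.comp (((measurable_pi_apply i).comp measurable_fst).prodMk
      ((measurable_pi_apply i).comp measurable_snd))
  have hcube : MeasurableSet (univ.pi fun _ : Fin d => Icc (0:ℝ) 1) :=
    MeasurableSet.univ_pi fun _ => measurableSet_Icc
  have hU : (fun ω i => vtSInv (vt δ Ψ Ψinv) (V ω i) (W ω i))
      =ᵐ[P] (fun p : (Fin d → ℝ) × (Fin d → ℝ) => fun i => T (p.1 i, p.2 i)) ∘
        fun ω => (V ω, W ω) := by
    filter_upwards [ae_mem_of_map_eq_withDensity_restrict hVm hcube hVlaw] with ω hω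
    funext i
    simp only [T, Function.comp_apply, unitClamp_of_mem (hω i (mem_univ i))]
  have hfvd : (fun u : Fin d → ℝ => ENNReal.ofReal (cV fun i => f (u i)))
      =ᵐ[volume.restrict (univ.pi fun _ : Fin d => Icc (0:ℝ) 1)]
        fun u => ENNReal.ofReal (cV fun i => vt δ Ψ Ψinv (u i)) := by
    filter_upwards [ae_restrict_mem hcube] with u hu
    simp only [hfv (hu _ (mem_univ _))]
  rw [Measure.map_congr hU, ← Measure.map_map hTd (hVm.prodMk hWm), hW, hVlaw,
    ← withDensity_congr_ae hfvd, volume_pi, Measure.restrict_pi_pi]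
  exact map_prod_withDensity_eq hTd
    (measurable_pi_lambda _ fun i => hf.comp (measurable_pi_apply i))
    (map_pi_prod_eq_of_map_prod_eq hT hf (h.map_vtSInv_eq hf hfv)) hcVm.ennreal_ofReal

theorem stmt_5 {Ω : Type*} [MeasurableSpace Ω] (P : Measure Ω) [IsProbabilityMeasure P]
    (δ : ℝ) (hδ : δ ∈ Set.Ioo (0:ℝ) 1) (Ψ Ψinv : ℝ → ℝ)
    (hΨc : ContinuousOn Ψ (Set.Icc 0 1)) (hΨm : StrictMonoOn Ψ (Set.Icc 0 1))
    (hΨ0 : Ψ 0 = 0) (hΨ1 : Ψ 1 = 1)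
    (hΨinv : ∀ x ∈ Set.Icc (0:ℝ) 1, Ψinv (Ψ x) = x ∧ Ψ (Ψinv x) = x)
    (hΨd : ∀ x ∈ Set.Ioo (0:ℝ) 1, DifferentiableAt ℝ Ψ x ∧ 0 < deriv Ψ x)
    (d : ℕ) (hd : 1 ≤ d)
    (V : Ω → Fin d → ℝ) (hVm : Measurable V)
    (W : Ω → Fin d → ℝ) (hWm : Measurable W)
    (cV : (Fin d → ℝ) → ℝ) (hcVm : Measurable cV)
    -- the law of `V` has density `cV` w.r.t. Lebesgue measure on `[0,1]^d`
    (hVlaw : Measure.map V P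
      = (volume.restrict (Set.univ.pi fun _ : Fin d => Set.Icc (0:ℝ) 1)).withDensity
          fun x => ENNReal.ofReal (cV x))
    -- one-dimensional margins of `V` are uniform
    (hVmarg : ∀ i, Measure.map (fun ω => V ω i) P = volume.restrict (Set.Icc (0:ℝ) 1))
    -- `W₁,…,W_d` are i.i.d. uniform on `[0,1]` and independent of `V`
    (hW : Measure.map (fun ω => (V ω, W ω)) P
      = (Measure.map V P).prod
          (volume.restrict (Set.univ.pi fun _ : Fin d => Set.Icc (0:ℝ) 1))) :
    -- the law of `U` with `Uᵢ = 𝒱⁻¹ₛ(Vᵢ, Wᵢ)` has density `u ↦ c_V(𝒱(u₁),…,𝒱(u_d))`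
    Measure.map (fun ω i => vtSInv (vt δ Ψ Ψinv) (V ω i) (W ω i)) P
      = (volume.restrict (Set.univ.pi fun _ : Fin d => Set.Icc (0:ℝ) 1)).withDensity
          fun u => ENNReal.ofReal (cV fun i => vt δ Ψ Ψinv (u i)) :=
  stmt_5_general P δ hδ Ψ Ψinv hΨc hΨm hΨ0 hΨ1 hΨinv hΨd d V hVm W hWm cV hcVm hVlaw hW
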